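/- For all natural numbers M ≥ 1 and all j with 0 ≤ j ≤ M, the identity ∑_{k=0}^{j} (-1)^{j-k} 2^{4k} (C(2(M−k), j−k) − C(2(M−k), j−1−k)) C(M+k, 2k) = C(4M+2, 2j) holds. -/

import Mathlib

/-!
For `x = (1 + X)²` and `y = (1 - X)²` we have `x + y = 2(1 + X²)`, `(x - y)² = 16X²` and
`xy = (1 - X²)²`, so the identity
`(x + y) · ∑ₖ C(n+k, 2k) (x - y)^(2k) (xy)^(n-k) = x^(2n+1) + y^(2n+1)`
(proved by a first-order recurrence together with its companion
`(x² - y²) · ∑ₖ C(n+1+k, 2k+1) (x - y)^(2k) (xy)^(n-k) = x^(2n+2) - y^(2n+2)`)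
becomes `2(1 + X²) · P(X²) = (1 + X)^(4M+2) + (1 - X)^(4M+2)` with
`P(Y) = ∑ₖ C(M+k, 2k) 16ᵏ Yᵏ (1 - Y)^(2(M-k))`. The sum in the statement is
`[Yʲ]P + [Yʲ⁻¹]P`, and comparing coefficients of `X^(2j)` gives `C(4M+2, 2j)`.
-/
open Polynomial Finset

section MorganVoyce

variable {R : Type*} [CommSemiring R]

/-- The Morgan–Voyce polynomials `b_n` and `B_n`, homogenized: `b_n(s) = morganVoyce s 1 n` and
`B_n(s) = morganVoyceBig s 1 n`. -/
def morganVoyce (s p : R) (n : ℕ) : R :=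
  ∑ k ∈ range (n + 1), ((n + k).choose (2 * k) : R) * s ^ k * p ^ (n - k)

def morganVoyceBig (s p : R) (n : ℕ) : R :=
  ∑ k ∈ range (n + 1), ((n + 1 + k).choose (2 * k + 1) : R) * s ^ k * p ^ (n - k)

variable (s p : R)

lemma morganVoyce_succ (n : ℕ) :
    morganVoyce s p (n + 1) = p * morganVoyce s p n + s * morganVoyceBig s p n := by
  have hterm (k : ℕ) :
      ((n + 1 + (k + 1)).choose (2 * (k + 1)) : R) * s ^ (k + 1) * p ^ (n + 1 - (k + 1))
        = p * (((n + (k + 1)).choose (2 * (k + 1)) : R) * s ^ (k + 1) * p ^ (n - (k + 1)))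
          + s * (((n + 1 + k).choose (2 * k + 1) : R) * s ^ k * p ^ (n - k)) := by
    rw [show n + 1 + (k + 1) = n + 1 + k + 1 by ring, show n + (k + 1) = n + 1 + k by ring,
      show 2 * (k + 1) = 2 * k + 1 + 1 by ring, Nat.choose_succ_succ', Nat.add_sub_add_right,
      Nat.cast_add]
    rcases lt_or_ge k n with hk | hk
    · rw [show n - k = n - (k + 1) + 1 by omega, pow_succ]
      ring
    · rw [Nat.choose_eq_zero_of_lt (by omega : n + 1 + k < 2 * k + 1 + 1)]
      ring
  have htop : ((n + (n + 1)).choose (2 * (n + 1)) : R) = 0 := by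
    rw [Nat.choose_eq_zero_of_lt (by omega), Nat.cast_zero]
  rw [morganVoyce, sum_range_succ', sum_congr rfl fun k _ => hterm k, sum_add_distrib, ← mul_sum,
    ← mul_sum, ← morganVoyceBig, sum_range_succ, htop, morganVoyce, sum_range_succ' _ n]
  simp only [zero_mul, add_zero, mul_add, Nat.sub_zero, mul_zero, pow_zero, mul_one,
    Nat.choose_zero_right, pow_succ]
  ring

lemma morganVoyceBig_succ (n : ℕ) :
    morganVoyceBig s p (n + 1) = p * morganVoyceBig s p n + morganVoyce s p (n + 1) := by
  have hterm (k : ℕ) :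
      ((n + 1 + 1 + k).choose (2 * k + 1) : R) * s ^ k * p ^ (n + 1 - k)
        = p * (((n + 1 + k).choose (2 * k + 1) : R) * s ^ k * p ^ (n - k))
          + ((n + 1 + k).choose (2 * k) : R) * s ^ k * p ^ (n + 1 - k) := by
    rw [show n + 1 + 1 + k = n + 1 + k + 1 by ring, Nat.choose_succ_succ', Nat.cast_add]
    rcases le_or_gt k n with hk | hk
    · rw [show n + 1 - k = n - k + 1 by omega, pow_succ]
      ring
    · rw [Nat.choose_eq_zero_of_lt (by omega : n + 1 + k < 2 * k + 1)]
      ring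
  have htop : ((n + 1 + (n + 1)).choose (2 * (n + 1) + 1) : R) = 0 := by
    rw [Nat.choose_eq_zero_of_lt (by omega), Nat.cast_zero]
  rw [morganVoyceBig, sum_congr rfl fun k _ => hterm k, sum_add_distrib, ← mul_sum, ← morganVoyce,
    sum_range_succ, htop, morganVoyceBig]
  simp

lemma map_morganVoyce {S F : Type*} [CommSemiring S] [FunLike F R S] [RingHomClass F R S] (f : F)
    (n : ℕ) :
    f (morganVoyce s p n) = morganVoyce (f s) (f p) n := by
  simp [morganVoyce]

end MorganVoyce

theorem add_mul_morganVoyce_sub_sq {R : Type*} [CommRing R] (x y : R) (n : ℕ) :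
    (x + y) * morganVoyce ((x - y) ^ 2) (x * y) n = x ^ (2 * n + 1) + y ^ (2 * n + 1) := by
  suffices h : (x + y) * morganVoyce ((x - y) ^ 2) (x * y) n = x ^ (2 * n + 1) + y ^ (2 * n + 1) ∧
      (x ^ 2 - y ^ 2) * morganVoyceBig ((x - y) ^ 2) (x * y) n = x ^ (2 * n + 2) - y ^ (2 * n + 2)
    from h.1
  induction n with
  | zero => simp [morganVoyce, morganVoyceBig]
  | succ n ih =>
    obtain ⟨ih₁, ih₂⟩ := ih
    have h₁ : (x + y) * morganVoyce ((x - y) ^ 2) (x * y) (n + 1)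
        = x ^ (2 * (n + 1) + 1) + y ^ (2 * (n + 1) + 1) := by
      rw [morganVoyce_succ]
      linear_combination (x * y) * ih₁ + (x - y) * ih₂
    refine ⟨h₁, ?_⟩
    rw [morganVoyceBig_succ]
    linear_combination (x * y) * ih₂ + (x - y) * h₁

lemma coeff_one_sub_X_pow {R : Type*} [CommRing R] (n k : ℕ) :
    ((1 - X : R[X]) ^ n).coeff k = (-1) ^ k * n.choose k := by
  have h : (1 - X : R[X]) ^ n = C ((-1) ^ n) * (X + C (-1)) ^ n := by
    rw [C_pow, ← mul_pow, C_neg, C_1]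
    ring
  rw [h, coeff_C_mul, coeff_X_add_C_pow]
  rcases le_or_gt k n with hk | hk
  · obtain ⟨d, rfl⟩ := Nat.exists_eq_add_of_le hk
    have hsq : ((-1 : R) ^ d) * (-1) ^ d = 1 := by rw [← mul_pow]; simp
    rw [Nat.add_sub_cancel_left, pow_add]
    linear_combination ((-1) ^ k * (k + d).choose k : R) * hsq
  · simp [Nat.choose_eq_zero_of_lt hk]

section Coefficients

variable {R : Type*} [CommRing R]

lemma coeff_morganVoyce_sixteen_X (M j : ℕ) :
    (morganVoyce (16 * X : R[X]) ((1 - X) ^ 2) M).coeff j =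
      ∑ k ∈ range (j + 1),
        (-1) ^ (j - k) * 16 ^ k * ((2 * (M - k)).choose (j - k) : R) * (M + k).choose (2 * k) := by
  set a : ℕ → R := fun k ↦
    (-1) ^ (j - k) * 16 ^ k * ((2 * (M - k)).choose (j - k) : R) * (M + k).choose (2 * k)
  have hterm (k : ℕ) :
      (((M + k).choose (2 * k) : R[X]) * (16 * X) ^ k * ((1 - X) ^ 2) ^ (M - k)).coeff j
        = if k ≤ j then a k else 0 := by
    have hC : ((M + k).choose (2 * k) : R[X]) * (16 * X) ^ k * ((1 - X) ^ 2) ^ (M - k)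
        = C (((M + k).choose (2 * k) : R) * 16 ^ k) * (X ^ k * (1 - X) ^ (2 * (M - k))) := by
      simp only [map_mul, map_pow, map_natCast, map_ofNat, pow_mul]
      ring
    rw [hC, coeff_C_mul, coeff_X_pow_mul', coeff_one_sub_X_pow]
    split_ifs
    · ring
    · simp
  have hvanish (k : ℕ) (hk : M < k) : a k = 0 := by
    simp [a, Nat.choose_eq_zero_of_lt (by omega : M + k < 2 * k)]
  rw [morganVoyce, finsetSum_coeff, sum_congr rfl fun k _ ↦ hterm k, ← sum_filter,
    ← sum_filter_of_ne (s := range (j + 1)) (p := (· ≤ M))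
      fun k _ h ↦ by contrapose! h; exact hvanish k h]
  congr 1
  ext k
  simp only [mem_filter, mem_range]
  omega

lemma two_mul_one_add_X_sq_mul_expand_morganVoyce (M : ℕ) :
    2 * (1 + X ^ 2) * expand R 2 (morganVoyce (16 * X) ((1 - X) ^ 2) M)
      = (1 + X) ^ (4 * M + 2) + (1 - X) ^ (4 * M + 2) := by
  have h := add_mul_morganVoyce_sub_sq ((1 + X) ^ 2 : R[X]) ((1 - X) ^ 2) M
  rw [map_morganVoyce]
  simp only [map_mul, map_ofNat, expand_X, map_pow, map_sub, map_one]
  rw [show ((1 + X) ^ 2 - (1 - X) ^ 2) ^ 2 = (16 * X ^ 2 : R[X]) by ring,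
    show (1 + X) ^ 2 * (1 - X) ^ 2 = ((1 - X ^ 2) ^ 2 : R[X]) by ring,
    show (1 + X) ^ 2 + (1 - X) ^ 2 = (2 * (1 + X ^ 2) : R[X]) by ring, ← pow_mul, ← pow_mul,
    show 2 * (2 * M + 1) = 4 * M + 2 by ring] at h
  exact h

end Coefficients

lemma coeff_morganVoyce_sixteen_X_succ_add (M j : ℕ) :
    (morganVoyce (16 * X : ℚ[X]) ((1 - X) ^ 2) M).coeff (j + 1)
      + (morganVoyce (16 * X : ℚ[X]) ((1 - X) ^ 2) M).coeff j
      = (4 * M + 2).choose (2 * (j + 1)) := by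
  have h := congrArg (coeff · (2 * (j + 1)))
    (two_mul_one_add_X_sq_mul_expand_morganVoyce (R := ℚ) M)
  set P := morganVoyce (16 * X : ℚ[X]) ((1 - X) ^ 2) M
  have hsplit :
      2 * (1 + X ^ 2) * expand ℚ 2 P = C 2 * expand ℚ 2 P + C 2 * (X ^ 2 * expand ℚ 2 P) := by
    rw [C_ofNat]
    ring
  simp only [hsplit, coeff_add, coeff_C_mul, coeff_X_pow_mul', coeff_expand two_pos,
    coeff_one_add_X_pow, coeff_one_sub_X_pow, show 2 * (j + 1) - 2 = 2 * j by omega] at h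
  rw [if_pos (dvd_mul_right 2 _), if_pos (by omega), if_pos (dvd_mul_right 2 _),
    Nat.mul_div_cancel_left _ two_pos, Nat.mul_div_cancel_left _ two_pos, pow_mul, neg_one_sq,
    one_pow, one_mul] at h
  linarith

theorem stmt_2_general (M j : ℕ) :
    ∑ k ∈ Finset.range (j + 1),
      (-1 : ℚ) ^ (j - k) * 2 ^ (4 * k) *
        (((2 * (M - k)).choose (j - k) : ℚ) -
          (if k + 1 ≤ j then ((2 * (M - k)).choose (j - 1 - k) : ℚ) else 0)) *
        ((M + k).choose (2 * k))
    = ((4 * M + 2).choose (2 * j) : ℚ) := by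
  rcases j with _ | j
  · simp
  rw [← coeff_morganVoyce_sixteen_X_succ_add, coeff_morganVoyce_sixteen_X,
    coeff_morganVoyce_sixteen_X, sum_range_succ, sum_range_succ _ (j + 1), if_neg (by omega)]
  have hterm : ∀ k ∈ range (j + 1),
      (-1 : ℚ) ^ (j + 1 - k) * 2 ^ (4 * k) * (((2 * (M - k)).choose (j + 1 - k) : ℚ) -
          (if k + 1 ≤ j + 1 then ((2 * (M - k)).choose (j + 1 - 1 - k) : ℚ) else 0)) *
        ((M + k).choose (2 * k))
      = (-1) ^ (j + 1 - k) * 16 ^ k * ((2 * (M - k)).choose (j + 1 - k) : ℚ)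
            * (M + k).choose (2 * k)
        + (-1) ^ (j - k) * 16 ^ k * ((2 * (M - k)).choose (j - k) : ℚ)
            * (M + k).choose (2 * k) := by
    intro k hk
    rw [mem_range] at hk
    rw [if_pos (by omega), show j + 1 - 1 - k = j - k by omega, show j + 1 - k = j - k + 1 by omega,
      pow_succ, pow_mul]
    ring
  rw [sum_congr rfl hterm, sum_add_distrib, pow_mul]
  norm_num
  ring

theorem stmt_2 (M j : ℕ) (hM : 1 ≤ M) (hj : j ≤ M) :
    ∑ k ∈ Finset.range (j + 1),
      (-1 : ℚ) ^ (j - k) * 2 ^ (4 * k) *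
        (((2 * (M - k)).choose (j - k) : ℚ) -
          (if k + 1 ≤ j then ((2 * (M - k)).choose (j - 1 - k) : ℚ) else 0)) *
        ((M + k).choose (2 * k))
    = ((4 * M + 2).choose (2 * j) : ℚ) :=
  stmt_2_general M j
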